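/- arXiv:2402.04842 — 2 statements merged into one kernel-verified Lean document; each statement's English description precedes it below -/
import Mathlib

section
/- Let Ω be an admissible probability space with flow (θ_z)_{z∈ℝ^d}. Then the extended metric d on Ω×ℝ^d is lower semicontinuous on (Ω×ℝ^d)×(Ω×ℝ^d) with respect to the product topology; that is, if (ω_n,z_n)→(ω,z) and (ω'_n,z'_n)→(ω',z') in Ω×ℝ^d, then d((ω,z),(ω',z')) ≤ liminf_{n→∞} d((ω_n,z_n),(ω'_n,z'_n)). -/
open MeasureTheory ProbabilityTheory Filter Topology Set
open scoped ENNReal RealInnerProductSpace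

noncomputable section

abbrev Ed (d : ℕ) : Type := EuclideanSpace ℝ (Fin d)

/-- An admissible probability space: metrizable `Ω` with a jointly measurable and jointly
continuous flow `θ` of `ℝ^d` under which the probability measure `Q` is stationary. -/
structure AdmissibleFlow (Ω : Type*) [TopologicalSpace Ω] [MeasurableSpace Ω]
    (d : ℕ) (θ : Ed d → Ω → Ω) (Q : Measure Ω) : Prop where
  metrizable : TopologicalSpace.MetrizableSpace Ω
  prob : IsProbabilityMeasure Q
  flow_zero : ∀ ω, θ 0 ω = ω
  flow_comp : ∀ (x z : Ed d) (ω : Ω), θ z (θ x ω) = θ (x + z) ω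
  flow_meas : Measurable fun p : Ω × Ed d => θ p.2 p.1
  flow_cont : Continuous fun p : Ω × Ed d => θ p.2 p.1
  stationary : ∀ z : Ed d, Q.map (θ z) = Q

variable {d : ℕ} {Ω : Type*}

/-- `d_Ω(ω₁,ω₂) = inf {‖z‖ : θ_z ω₁ = ω₂}` (`= ∞` if no such `z`). -/
def dOmega (θ : Ed d → Ω → Ω) (ω₁ ω₂ : Ω) : ℝ≥0∞ :=
  ⨅ (z : Ed d) (_ : θ z ω₁ = ω₂), ENNReal.ofReal ‖z‖

/-- `d((ω₁,z₁),(ω₂,z₂)) = (‖z₁ - z₂‖² + d_Ω(ω₁,ω₂)²)^{1/2}`. -/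
def dProd (θ : Ed d → Ω → Ω) (p q : Ω × Ed d) : ℝ≥0∞ :=
  (ENNReal.ofReal ‖p.2 - q.2‖ ^ 2 + dOmega θ p.1 q.1 ^ 2) ^ (1 / 2 : ℝ)

/-- The unit cube `Λ₁ = [-1/2,1/2]^d`. -/
def cube (d : ℕ) : Set (Ed d) := {x : Ed d | ∀ i, x i ∈ Icc (-(1 / 2) : ℝ) (1 / 2)}

/-- A random measure (kernel) is equivariant if `ξ(ω,B) = ξ(θ_z ω, B - z)`. -/
def EquivariantRM (θ : Ed d → Ω → Ω) [MeasurableSpace Ω] (ξ : Kernel Ω (Ed d)) : Prop :=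
  ∀ (ω : Ω) (z : Ed d) (B : Set (Ed d)), MeasurableSet B →
    ξ ω B = ξ (θ z ω) ((· + z) ⁻¹' B)

/-- A random measure is `Q`-a.s. locally finite. -/
def LocFiniteRM [MeasurableSpace Ω] (Q : Measure Ω) (ξ : Kernel Ω (Ed d)) : Prop :=
  ∀ᵐ ω ∂Q, ∀ B : Set (Ed d), Bornology.IsBounded B → ξ ω B < ⊤

/-- `Qξ` is the Palm measure of `ξ` (w.r.t. `Q` and the flow `θ`):
`Qξ(A) = ∫∫_{Λ₁} 1_A(θ_z ω) ξ(ω,dz) Q(dω)`. -/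
def IsPalm (θ : Ed d → Ω → Ω) [MeasurableSpace Ω] (Q : Measure Ω)
    (ξ : Kernel Ω (Ed d)) (Qξ : Measure Ω) : Prop :=
  ∀ A : Set Ω, MeasurableSet A →
    Qξ A = ∫⁻ ω, ∫⁻ z in cube d, A.indicator (fun _ => (1 : ℝ≥0∞)) (θ z ω) ∂(ξ ω) ∂Q

/-- The intensity of a random measure. -/
def intensityRM [MeasurableSpace Ω] (Q : Measure Ω) (ξ : Kernel Ω (Ed d)) : ℝ≥0∞ :=
  ∫⁻ ω, ξ ω (cube d) ∂Q

/-!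
The function `d_Ω` is lower semicontinuous on `Ω × Ω`: for `r ≥ 0`, the infimum defining it is
attained (the set of shifts carrying `ω` to `ω'` is closed in `ℝ^d`), so the sublevel set
`{d_Ω ≤ r}` is the projection of the closed set `{(ω, ω', z) : θ_z ω = ω'}` along the compact
ball `‖z‖ ≤ r`, hence closed. Then `d` is a continuous monotone function of the continuous
`‖z₁ - z₂‖` and the lower semicontinuous `d_Ω`, and lower semicontinuity gives the `liminf` bound.
-/

section FlowDistance

variable {θ : Ed d → Ω → Ω} {ω ω' : Ω}

lemma dOmega_eq_infEDist : dOmega θ ω ω' = Metric.infEDist 0 {z | θ z ω = ω'} := by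
  simp only [dOmega, Metric.infEDist, mem_ofPred_eq, edist_zero_left, ofReal_norm]
  rfl

lemma dOmega_flow_le_ofReal_norm (z : Ed d) : dOmega θ ω (θ z ω) ≤ ENNReal.ofReal ‖z‖ := by
  unfold dOmega
  exact iInf₂_le z (rfl : θ z ω = θ z ω)

variable [TopologicalSpace Ω] [T2Space Ω]

lemma exists_flow_eq_ofReal_norm_eq_dOmega (hθ : Continuous fun z => θ z ω)
    (h : dOmega θ ω ω' ≠ ⊤) :
    ∃ z, θ z ω = ω' ∧ ENNReal.ofReal ‖z‖ = dOmega θ ω ω' := by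
  rw [dOmega_eq_infEDist] at h ⊢
  have hne : {z | θ z ω = ω'}.Nonempty := by
    by_contra hempty
    exact h (by rw [not_nonempty_iff_eq_empty.mp hempty, Metric.infEDist_empty])
  obtain ⟨z, hz, hdist⟩ := (isClosed_eq hθ continuous_const).exists_infDist_eq_dist hne 0
  refine ⟨z, hz, ?_⟩
  rw [← ENNReal.ofReal_toReal h, ← Metric.infDist, hdist, dist_zero_left]

lemma dOmega_le_ofReal_iff (hθ : Continuous fun z => θ z ω) {r : ℝ} (hr : 0 ≤ r) :
    dOmega θ ω ω' ≤ ENNReal.ofReal r ↔ ∃ z ∈ Metric.closedBall (0 : Ed d) r, θ z ω = ω' := by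
  constructor
  · intro hle
    obtain ⟨z, hz, hnorm⟩ :=
      exists_flow_eq_ofReal_norm_eq_dOmega hθ (ne_top_of_le_ne_top ENNReal.ofReal_ne_top hle)
    refine ⟨z, ?_, hz⟩
    rw [mem_closedBall_zero_iff, ← ENNReal.ofReal_le_ofReal_iff hr, hnorm]
    exact hle
  · rintro ⟨z, hz, rfl⟩
    exact (dOmega_flow_le_ofReal_norm z).trans
      (ENNReal.ofReal_le_ofReal (mem_closedBall_zero_iff.mp hz))

lemma isClosed_setOf_dOmega_le (hθ : Continuous fun p : Ω × Ed d => θ p.2 p.1)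
    {r : ℝ} (hr : 0 ≤ r) : IsClosed {p : Ω × Ω | dOmega θ p.1 p.2 ≤ ENNReal.ofReal r} := by
  have : CompactSpace (Metric.closedBall (0 : Ed d) r) :=
    isCompact_iff_compactSpace.mp (isCompact_closedBall 0 r)
  have hshifts : IsClosed {q : (Ω × Ω) × Metric.closedBall (0 : Ed d) r | θ q.2 q.1.1 = q.1.2} :=
    isClosed_eq (hθ.comp ((continuous_fst.comp continuous_fst).prodMk
      (continuous_subtype_val.comp continuous_snd))) (continuous_snd.comp continuous_fst)
  convert isClosedMap_fst_of_compactSpace _ hshifts using 1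
  ext ⟨ω, ω'⟩
  have hθω : Continuous fun z => θ z ω := hθ.comp (continuous_const.prodMk continuous_id)
  change dOmega θ ω ω' ≤ _ ↔ _
  rw [dOmega_le_ofReal_iff hθω hr]
  constructor
  · rintro ⟨z, hz, hθz⟩
    exact ⟨((ω, ω'), ⟨z, hz⟩), hθz, rfl⟩
  · rintro ⟨⟨_, z, hz⟩, hθz, rfl⟩
    exact ⟨z, hz, hθz⟩

lemma lowerSemicontinuous_dOmega (hθ : Continuous fun p : Ω × Ed d => θ p.2 p.1) :
    LowerSemicontinuous fun p : Ω × Ω => dOmega θ p.1 p.2 := by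
  refine lowerSemicontinuous_iff_isClosed_preimage.mpr fun r => ?_
  rcases eq_or_ne r ⊤ with rfl | hr
  · simp only [Iic_top, preimage_univ, isClosed_univ]
  · rw [← ENNReal.ofReal_toReal hr]
    exact isClosed_setOf_dOmega_le hθ ENNReal.toReal_nonneg

lemma lowerSemicontinuous_dProd (hθ : Continuous fun p : Ω × Ed d => θ p.2 p.1) :
    LowerSemicontinuous fun pq : (Ω × Ed d) × (Ω × Ed d) => dProd θ pq.1 pq.2 := by
  have hsq : Continuous fun a : ℝ≥0∞ => a ^ 2 := ENNReal.continuous_pow 2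
  have hsq_mono : Monotone fun a : ℝ≥0∞ => a ^ 2 := fun _ _ h => pow_le_pow_left₀ zero_le h 2
  have hshift : LowerSemicontinuous fun pq : (Ω × Ed d) × (Ω × Ed d) =>
      ENNReal.ofReal ‖pq.1.2 - pq.2.2‖ ^ 2 :=
    (hsq.comp (ENNReal.continuous_ofReal.comp (by fun_prop))).lowerSemicontinuous
  have hflow : LowerSemicontinuous fun pq : (Ω × Ed d) × (Ω × Ed d) =>
      dOmega θ pq.1.1 pq.2.1 ^ 2 :=
    hsq.comp_lowerSemicontinuous ((lowerSemicontinuous_dOmega hθ).comp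
      (g := fun pq : (Ω × Ed d) × (Ω × Ed d) => (pq.1.1, pq.2.1)) (by fun_prop)) hsq_mono
  exact ENNReal.continuous_rpow_const.comp_lowerSemicontinuous
    (g := fun a : ℝ≥0∞ => a ^ (1 / 2 : ℝ)) (hshift.add hflow)
    (ENNReal.monotone_rpow_of_nonneg (by norm_num))

end FlowDistance

/-- The extended metric `d` on `Ω × ℝ^d` is lower semicontinuous
w.r.t. the product topology. -/
theorem dProd_lowerSemicontinuous
    [TopologicalSpace Ω] [MeasurableSpace Ω]
    (θ : Ed d → Ω → Ω) (Q : Measure Ω) (adm : AdmissibleFlow Ω d θ Q)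
    (ωn ωn' : ℕ → Ω) (zn zn' : ℕ → Ed d) (ω ω' : Ω) (z z' : Ed d)
    (h : Tendsto (fun n => ((ωn n, zn n) : Ω × Ed d)) atTop (𝓝 (ω, z)))
    (h' : Tendsto (fun n => ((ωn' n, zn' n) : Ω × Ed d)) atTop (𝓝 (ω', z'))) :
    dProd θ (ω, z) (ω', z') ≤
      Filter.liminf (fun n => dProd θ (ωn n, zn n) (ωn' n, zn' n)) atTop := by
  have := adm.metrizable
  have hlsc := (lowerSemicontinuous_dProd adm.flow_cont).le_liminf ((ω, z), (ω', z'))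
  have hcomp := (h.prodMk_nhds h').liminf_le_liminf_comp
    (u := fun pq : (Ω × Ed d) × (Ω × Ed d) => dProd θ pq.1 pq.2)
  exact hlsc.trans hcomp

end
end

section
/- Let Ω be an admissible probability space with flow (θ_z)_{z∈ℝ^d} and let f:Ω×ℝ^d→ℝ be continuous (for the product topology) and bounded. For ε>0 let ρ_ε(z,u)=(2πε)^{-d}exp(−‖(z,u)‖²/(2ε)) and f_ε(ω,x)=∫_{ℝ^d}∫_{ℝ^d} ρ_ε(z,u) f(θ_zω, x−u) dz du. Then for all r,v∈ℝ^d, f_ε(θ_rω, x+v)=∫∫ ρ_ε(z−r, u+v) f(θ_zω, x−u) dz du; the gradients ∇_Ω f_ε(ω,x) and ∇_{ℝ^d} f_ε(ω,x) exist and satisfy (−∇_Ω f_ε(ω,x), ∇_{ℝ^d} f_ε(ω,x)) = ∫∫ ∇ρ_ε(z,u) f(θ_zω, x−u) dz du; and the resulting gradient of f_ε is uniformly bounded on Ω×ℝ^d and continuous with respect to the metric d. -/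
open MeasureTheory ProbabilityTheory Filter Topology Set
open scoped ENNReal RealInnerProductSpace BoundedContinuousFunction

noncomputable section

variable {d : ℕ} {Ω : Type*}

/-- `g` is the gradient of `Φ` at `ω` along the flow `θ`: for every curve `c` with
`c 0 = 0` differentiable at `0`, `d/dt|₀ Φ(θ_{c(t)} ω) = ⟪c'(0), g⟫`. -/
def HasGradOmega (θ : Ed d → Ω → Ω) (Φ : Ω → ℝ) (ω : Ω) (g : Ed d) : Prop :=
  ∀ (c : ℝ → Ed d) (v : Ed d), c 0 = 0 → HasDerivAt c v 0 →
    HasDerivAt (fun t => Φ (θ (c t) ω)) ⟪v, g⟫ 0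

/-- Continuity of a map on `Ω × ℝ^d` with respect to the extended metric `d`. -/
def ContWrtD {α : Type*} [PseudoMetricSpace α] (θ : Ed d → Ω → Ω) (g : Ω × Ed d → α) : Prop :=
  ∀ (p : Ω × Ed d) (ε : ℝ), 0 < ε → ∃ δ : ℝ, 0 < δ ∧
    ∀ q : Ω × Ed d, dProd θ p q < ENNReal.ofReal δ → dist (g q) (g p) < ε

/-- The Gaussian mollifier `ρ_ε(z,u) = (2πε)^{-d} exp(-‖(z,u)‖²/(2ε))`. -/
def rho (d : ℕ) (ε : ℝ) (z u : Ed d) : ℝ :=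
  (2 * Real.pi * ε) ^ (-(d : ℝ)) * Real.exp (-(‖z‖ ^ 2 + ‖u‖ ^ 2) / (2 * ε))

/-- The mollification `f_ε(ω,x) = ∫∫ ρ_ε(z,u) f(θ_z ω, x - u) dz du`. -/
def feps [TopologicalSpace Ω] (θ : Ed d → Ω → Ω) (f : Ω × Ed d → ℝ) (ε : ℝ)
    (ω : Ω) (x : Ed d) : ℝ :=
  ∫ zu : Ed d × Ed d, rho d ε zu.1 zu.2 * f (θ zu.1 ω, x - zu.2)

/-!
Write `F(z, u) = f(θ_z ω, x - u)`. By the cocycle law of the flow, moving `(ω, x)` to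
`(θ_r ω, x + v)` only translates the Gaussian: `f_ε(θ_r ω, x + v) = ∫ ρ_ε(p - (r, -v)) F(p) dp`.
Both gradients therefore come from differentiating a Gaussian convolution of the bounded function
`F` under the integral sign. One integrable Gaussian, `rhoMajorant`, dominates `ρ_ε` and `∇ρ_ε`
translated by any `a` with `‖a‖ ≤ 1`; this justifies the differentiation, gives the uniform bound,
and by dominated convergence makes `a ↦ ∫ F(p + a) ∇ρ_ε(p) dp` continuous at `0`. Since
`d((ω, x), (ω', y)) < δ` means `ω' = θ_z ω` with `‖z‖ < δ` and `‖x - y‖ < δ`, the latter is exactly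
the continuity of the gradient with respect to `d`.
-/

section GradientCalculus

variable {H : Type*} [NormedAddCommGroup H] [InnerProductSpace ℝ H] [CompleteSpace H]
  {f : H → ℝ} {g x a : H}

theorem HasGradientAt.comp_const_sub (h : HasGradientAt f g (a - x)) :
    HasGradientAt (fun y ↦ f (a - y)) (-g) x := by
  rw [hasGradientAt_iff_hasFDerivAt] at h ⊢
  exact (h.comp x ((hasFDerivAt_id x).const_sub a)).congr_fderiv (by ext v; simp)

theorem HasGradientAt.comp_const_add (h : HasGradientAt f g (a + x)) :
    HasGradientAt (fun y ↦ f (a + y)) g x := by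
  rw [hasGradientAt_iff_hasFDerivAt] at h ⊢
  exact (h.comp x ((hasFDerivAt_id x).const_add a)).congr_fderiv (by ext v; simp)

theorem HasGradientAt.of_comp_const_add (h : HasGradientAt (fun v ↦ f (x + v)) g 0) :
    HasGradientAt f g x := by
  have := HasGradientAt.comp_const_add (a := -x) (x := x) (by rwa [neg_add_cancel])
  simp only [add_neg_cancel_left] at this
  exact this

theorem HasGradientAt.mul_const (h : HasGradientAt f g x) (c : ℝ) :
    HasGradientAt (fun y ↦ f y * c) (c • g) x := by
  rw [hasGradientAt_iff_hasFDerivAt] at h ⊢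
  exact (h.mul_const c).congr_fderiv (by ext v; simp)

end GradientCalculus

section GradientIntegral

open InnerProductSpace

variable {α H : Type*} [MeasurableSpace α] {μ : Measure α}
  [NormedAddCommGroup H] [InnerProductSpace ℝ H] [CompleteSpace H]

theorem integral_toDual {φ : α → H} (hφ : Integrable φ μ) :
    ∫ a, toDual ℝ H (φ a) ∂μ = toDual ℝ H (∫ a, φ a ∂μ) := by
  ext v
  have hφ' : Integrable (fun a ↦ toDual ℝ H (φ a)) μ :=
    hφ.norm.mono' ((toDual ℝ H).continuous.comp_aestronglyMeasurable hφ.1)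
      (ae_of_all _ fun a ↦ ((toDual ℝ H).norm_map (φ a)).le)
  rw [ContinuousLinearMap.integral_apply hφ']
  simp only [toDual_apply_apply, real_inner_comm v]
  exact integral_inner (𝕜 := ℝ) hφ v

theorem hasGradientAt_integral_of_dominated_of_gradient_le {G : H → α → ℝ} {G' : H → α → H}
    {x₀ : H} {s : Set H} {bound : α → ℝ} (hs : s ∈ 𝓝 x₀)
    (hG_meas : ∀ᶠ x in 𝓝 x₀, AEStronglyMeasurable (G x) μ) (hG_int : Integrable (G x₀) μ)
    (hG'_meas : AEStronglyMeasurable (G' x₀) μ)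
    (h_bound : ∀ᵐ a ∂μ, ∀ x ∈ s, ‖G' x a‖ ≤ bound a) (bound_integrable : Integrable bound μ)
    (h_diff : ∀ᵐ a ∂μ, ∀ x ∈ s, HasGradientAt (G · a) (G' x a) x) :
    HasGradientAt (fun x ↦ ∫ a, G x a ∂μ) (∫ a, G' x₀ a ∂μ) x₀ := by
  have hG'_int : Integrable (G' x₀) μ :=
    bound_integrable.mono' hG'_meas (h_bound.mono fun a ha ↦ ha x₀ (mem_of_mem_nhds hs))
  have key := hasFDerivAt_integral_of_dominated_of_fderiv_le (F' := fun x a ↦ toDual ℝ H (G' x a))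
    hs hG_meas hG_int ((toDual ℝ H).continuous.comp_aestronglyMeasurable hG'_meas)
    (by simpa only [LinearIsometryEquiv.norm_map] using h_bound) bound_integrable
    (h_diff.mono fun a ha x hx ↦ (ha x hx).hasFDerivAt)
  rwa [integral_toDual hG'_int, ← hasGradientAt_iff_hasFDerivAt] at key

end GradientIntegral

section KernelIntegrals

variable {E V : Type*} [MeasurableSpace E] [NormedAddCommGroup V] [NormedSpace ℝ V]
  {μ : Measure E} {F : E → ℝ} {k : E → V} {b : E → ℝ} {C : ℝ}

theorem norm_smul_le_of_abs_le {r : ℝ} {v : V} {c b : ℝ} (hr : |r| ≤ c) (hv : ‖v‖ ≤ b) :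
    ‖r • v‖ ≤ c * b := by
  rw [norm_smul, Real.norm_eq_abs]
  exact mul_le_mul hr hv (norm_nonneg v) ((abs_nonneg r).trans hr)

theorem norm_integral_smul_le (hFC : ∀ p, |F p| ≤ C) (hb : Integrable b μ)
    (hkb : ∀ p, ‖k p‖ ≤ b p) : ‖∫ p, F p • k p ∂μ‖ ≤ C * ∫ p, b p ∂μ := by
  rw [← integral_const_mul]
  exact norm_integral_le_of_norm_le (hb.const_mul C)
    (ae_of_all _ fun p ↦ norm_smul_le_of_abs_le (hFC p) (hkb p))

theorem continuousAt_integral_comp_add_smul [NormedAddCommGroup E] [BorelSpace E]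
    [SecondCountableTopology E] [μ.IsAddRightInvariant]
    (hF : AEStronglyMeasurable F μ) (hFC : ∀ p, |F p| ≤ C) (hk : Continuous k)
    (hb : Integrable b μ) (hkb : ∀ a, ‖a‖ ≤ 1 → ∀ p, ‖k (p - a)‖ ≤ b p) :
    ContinuousAt (fun a ↦ ∫ p, F (p + a) • k p ∂μ) 0 := by
  have hshift : (fun a ↦ ∫ p, F (p + a) • k p ∂μ) = fun a ↦ ∫ p, F p • k (p - a) ∂μ := by
    funext a
    simpa using integral_add_right_eq_self (μ := μ) (fun p ↦ F p • k (p - a)) a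
  rw [hshift]
  refine continuousAt_of_dominated (bound := fun p ↦ C * b p) ?_ ?_ (hb.const_mul C) ?_
  · exact Eventually.of_forall fun a ↦
      hF.smul (hk.comp (continuous_id.sub continuous_const)).aestronglyMeasurable
  · filter_upwards [Metric.closedBall_mem_nhds (0 : E) one_pos] with a ha
    refine ae_of_all _ fun p ↦ norm_smul_le_of_abs_le (hFC p) (hkb a ?_ p)
    simpa using ha
  · exact ae_of_all _ fun p ↦
      (continuous_const.smul (hk.comp (continuous_const.sub continuous_id))).continuousAt

end KernelIntegrals

section Gaussian

variable {ε : ℝ}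

theorem integrable_exp_neg_mul_sq_norm {V : Type*} [NormedAddCommGroup V] [InnerProductSpace ℝ V]
    [FiniteDimensional ℝ V] [MeasurableSpace V] [BorelSpace V] {b : ℝ} (hb : 0 < b) :
    Integrable fun v : V ↦ Real.exp (-b * ‖v‖ ^ 2) := by
  have := (GaussianFourier.integrable_cexp_neg_mul_sq_norm_add (V := V) (b := b)
    (by simpa using hb) 0 0).norm
  convert this using 2 with v
  norm_cast
  simp

theorem one_add_norm_sub_mul_exp_le {E : Type*} [SeminormedAddCommGroup E] (hε : 0 < ε)
    {a : E} (ha : ‖a‖ ≤ 1) (v : E) :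
    (1 + ‖v - a‖) * Real.exp (-‖v - a‖ ^ 2 / (2 * ε)) ≤
      Real.exp (ε + 1 / (4 * ε)) * Real.exp (-‖v‖ ^ 2 / (8 * ε)) := by
  set s := ‖v - a‖
  have ht : ‖v‖ ≤ s + 1 := by linarith [norm_sub_norm_le v a]
  have ht2 : ‖v‖ ^ 2 ≤ 2 * s ^ 2 + 2 := by
    nlinarith [pow_le_pow_left₀ (norm_nonneg v) ht 2, sq_nonneg (s - 1)]
  have hexp : s - s ^ 2 / (2 * ε) ≤ ε + 1 / (4 * ε) + -‖v‖ ^ 2 / (8 * ε) := by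
    rw [← sub_nonneg]
    have : ε + 1 / (4 * ε) + -‖v‖ ^ 2 / (8 * ε) - (s - s ^ 2 / (2 * ε)) =
        (2 * (s - 2 * ε) ^ 2 + (2 * s ^ 2 + 2 - ‖v‖ ^ 2)) / (8 * ε) := by
      field_simp; ring
    rw [this]
    exact div_nonneg (by nlinarith) (by positivity)
  calc (1 + s) * Real.exp (-s ^ 2 / (2 * ε))
      ≤ Real.exp s * Real.exp (-s ^ 2 / (2 * ε)) := by
        gcongr; linarith [Real.add_one_le_exp s]
    _ = Real.exp (s - s ^ 2 / (2 * ε)) := by rw [← Real.exp_add]; ring_nf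
    _ ≤ _ := by rw [← Real.exp_add]; exact Real.exp_le_exp.2 hexp

theorem rho_comm (z u : Ed d) : rho d ε z u = rho d ε u z := by
  rw [rho, rho, add_comm]

theorem rho_nonneg (hε : 0 < ε) (z u : Ed d) : 0 ≤ rho d ε z u := by
  unfold rho; positivity

theorem rho_eq_mul (z u : Ed d) : rho d ε z u = (2 * Real.pi * ε) ^ (-(d : ℝ)) *
    (Real.exp (-‖z‖ ^ 2 / (2 * ε)) * Real.exp (-‖u‖ ^ 2 / (2 * ε))) := by
  rw [rho, ← Real.exp_add]; ring_nf

theorem rho_le_mul_one_add_norm (hε : 0 < ε) (z u : Ed d) :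
    rho d ε z u ≤ rho d ε z u * ((1 + ‖z‖) * (1 + ‖u‖)) :=
  le_mul_of_one_le_right (rho_nonneg hε z u) (by nlinarith [norm_nonneg z, norm_nonneg u])

theorem hasGradientAt_rho_left (z u : Ed d) :
    HasGradientAt (fun z ↦ rho d ε z u) ((-rho d ε z u / ε) • z) z := by
  rw [hasGradientAt_iff_hasFDerivAt]
  have h := (((hasStrictFDerivAt_norm_sq z).hasFDerivAt.add_const (‖u‖ ^ 2)).neg.mul_const
    (2 * ε)⁻¹).exp.const_mul ((2 * Real.pi * ε) ^ (-(d : ℝ)))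
  have hfun : (fun z ↦ rho d ε z u) = fun z ↦ (2 * Real.pi * ε) ^ (-(d : ℝ)) *
      Real.exp (-(‖z‖ ^ 2 + ‖u‖ ^ 2) * (2 * ε)⁻¹) := by
    funext z; simp [rho, div_eq_mul_inv]
  rw [hfun]
  refine h.congr_fderiv ?_
  ext w
  simp [rho, div_eq_mul_inv]
  ring

theorem gradient_rho_left (z u : Ed d) :
    gradient (fun z ↦ rho d ε z u) z = (-rho d ε z u / ε) • z :=
  (hasGradientAt_rho_left z u).gradient

theorem hasGradientAt_rho_right (z u : Ed d) :
    HasGradientAt (fun u ↦ rho d ε z u) ((-rho d ε z u / ε) • u) u := by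
  simp_rw [rho_comm z]
  exact hasGradientAt_rho_left u z

theorem gradient_rho_right (z u : Ed d) :
    gradient (fun u ↦ rho d ε z u) u = (-rho d ε z u / ε) • u := by
  simp_rw [rho_comm z]
  exact gradient_rho_left u z

theorem continuous_gradient_rho_left :
    Continuous fun p : Ed d × Ed d ↦ gradient (fun z ↦ rho d ε z p.2) p.1 := by
  simp_rw [gradient_rho_left, rho]; fun_prop

theorem continuous_gradient_rho_right :
    Continuous fun p : Ed d × Ed d ↦ gradient (fun u ↦ rho d ε p.1 u) p.2 := by
  simp_rw [gradient_rho_right, rho]; fun_prop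

theorem norm_gradient_rho_left_le (hε : 0 < ε) (z u : Ed d) :
    ‖gradient (fun z ↦ rho d ε z u) z‖ ≤ rho d ε z u * ((1 + ‖z‖) * (1 + ‖u‖)) / ε := by
  rw [gradient_rho_left, norm_smul, norm_div, norm_neg, Real.norm_of_nonneg (rho_nonneg hε z u),
    Real.norm_of_nonneg hε.le, div_mul_eq_mul_div]
  have : ‖z‖ ≤ (1 + ‖z‖) * (1 + ‖u‖) := by nlinarith [norm_nonneg z, norm_nonneg u]
  have := rho_nonneg hε z u
  gcongr

theorem norm_gradient_rho_right_le (hε : 0 < ε) (z u : Ed d) :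
    ‖gradient (fun u ↦ rho d ε z u) u‖ ≤ rho d ε z u * ((1 + ‖z‖) * (1 + ‖u‖)) / ε := by
  simp_rw [rho_comm z, mul_comm (1 + ‖z‖)]
  exact norm_gradient_rho_left_le hε u z

def rhoMajorant (d : ℕ) (ε : ℝ) (p : Ed d × Ed d) : ℝ :=
  (2 * Real.pi * ε) ^ (-(d : ℝ)) * Real.exp (ε + 1 / (4 * ε)) ^ 2 *
    (Real.exp (-‖p.1‖ ^ 2 / (8 * ε)) * Real.exp (-‖p.2‖ ^ 2 / (8 * ε)))

theorem integrable_rhoMajorant (hε : 0 < ε) : Integrable (rhoMajorant d ε) := by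
  have hγ : Integrable fun v : Ed d ↦ Real.exp (-‖v‖ ^ 2 / (8 * ε)) := by
    simpa [neg_div, div_eq_inv_mul] using integrable_exp_neg_mul_sq_norm (V := Ed d)
      (b := (8 * ε)⁻¹) (by positivity)
  rw [Measure.volume_eq_prod]
  exact (hγ.mul_prod hγ).const_mul _

theorem rho_sub_mul_le_rhoMajorant (hε : 0 < ε) {a : Ed d × Ed d} (ha : ‖a‖ ≤ 1)
    (p : Ed d × Ed d) :
    rho d ε (p - a).1 (p - a).2 * ((1 + ‖(p - a).1‖) * (1 + ‖(p - a).2‖)) ≤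
      rhoMajorant d ε p := by
  have h₁ := one_add_norm_sub_mul_exp_le hε ((norm_fst_le a).trans ha) p.1
  have h₂ := one_add_norm_sub_mul_exp_le hε ((norm_snd_le a).trans ha) p.2
  rw [rho_eq_mul, rhoMajorant, Prod.fst_sub, Prod.snd_sub]
  calc _ = (2 * Real.pi * ε) ^ (-(d : ℝ)) *
        (((1 + ‖p.1 - a.1‖) * Real.exp (-‖p.1 - a.1‖ ^ 2 / (2 * ε))) *
          ((1 + ‖p.2 - a.2‖) * Real.exp (-‖p.2 - a.2‖ ^ 2 / (2 * ε)))) := by ring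
    _ ≤ (2 * Real.pi * ε) ^ (-(d : ℝ)) *
        ((Real.exp (ε + 1 / (4 * ε)) * Real.exp (-‖p.1‖ ^ 2 / (8 * ε))) *
          (Real.exp (ε + 1 / (4 * ε)) * Real.exp (-‖p.2‖ ^ 2 / (8 * ε)))) := by gcongr
    _ = _ := by ring

end Gaussian

section GaussianIntegrals

variable {ε C : ℝ} {F : Ed d × Ed d → ℝ}

theorem rho_le_rhoMajorant (hε : 0 < ε) (p : Ed d × Ed d) :
    rho d ε p.1 p.2 ≤ rhoMajorant d ε p := by
  have h := rho_sub_mul_le_rhoMajorant hε (a := 0) (by simp) p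
  simp only [sub_zero] at h
  exact (rho_le_mul_one_add_norm hε p.1 p.2).trans h

theorem norm_gradient_rho_left_sub_le (hε : 0 < ε) {a : Ed d × Ed d} (ha : ‖a‖ ≤ 1)
    (p : Ed d × Ed d) :
    ‖gradient (fun z ↦ rho d ε z (p - a).2) (p - a).1‖ ≤ rhoMajorant d ε p / ε :=
  (norm_gradient_rho_left_le hε _ _).trans
    (div_le_div_of_nonneg_right (rho_sub_mul_le_rhoMajorant hε ha p) hε.le)

theorem norm_gradient_rho_right_sub_le (hε : 0 < ε) {a : Ed d × Ed d} (ha : ‖a‖ ≤ 1)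
    (p : Ed d × Ed d) :
    ‖gradient (fun u ↦ rho d ε (p - a).1 u) (p - a).2‖ ≤ rhoMajorant d ε p / ε :=
  (norm_gradient_rho_right_le hε _ _).trans
    (div_le_div_of_nonneg_right (rho_sub_mul_le_rhoMajorant hε ha p) hε.le)

theorem norm_integral_smul_gradient_rho_left_le (hε : 0 < ε) (hFC : ∀ p, |F p| ≤ C) :
    ‖∫ p, F p • gradient (fun z ↦ rho d ε z p.2) p.1‖ ≤ C * ∫ p, rhoMajorant d ε p / ε :=
  norm_integral_smul_le hFC ((integrable_rhoMajorant hε).div_const ε) fun p ↦ by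
    simpa using norm_gradient_rho_left_sub_le hε (a := 0) (by simp) p

theorem norm_integral_smul_gradient_rho_right_le (hε : 0 < ε) (hFC : ∀ p, |F p| ≤ C) :
    ‖∫ p, F p • gradient (fun u ↦ rho d ε p.1 u) p.2‖ ≤ C * ∫ p, rhoMajorant d ε p / ε :=
  norm_integral_smul_le hFC ((integrable_rhoMajorant hε).div_const ε) fun p ↦ by
    simpa using norm_gradient_rho_right_sub_le hε (a := 0) (by simp) p

theorem integrable_rho_mul (hε : 0 < ε) (hF : AEStronglyMeasurable F) (hFC : ∀ p, |F p| ≤ C) :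
    Integrable fun p : Ed d × Ed d ↦ rho d ε p.1 p.2 * F p := by
  refine ((integrable_rhoMajorant hε).mul_const C).mono'
    ((by unfold rho; fun_prop : Continuous fun p : Ed d × Ed d ↦ rho d ε p.1 p.2)
      |>.aestronglyMeasurable.mul hF) (ae_of_all _ fun p ↦ ?_)
  rw [norm_mul, Real.norm_of_nonneg (rho_nonneg hε _ _), Real.norm_eq_abs]
  exact mul_le_mul (rho_le_rhoMajorant hε p) (hFC p) (abs_nonneg _)
    ((rho_nonneg hε _ _).trans (rho_le_rhoMajorant hε p))

theorem hasGradientAt_integral_rho_sub_left (hε : 0 < ε) (hF : AEStronglyMeasurable F)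
    (hFC : ∀ p, |F p| ≤ C) :
    HasGradientAt (fun r ↦ ∫ p : Ed d × Ed d, rho d ε (p.1 - r) p.2 * F p)
      (-∫ p, F p • gradient (fun z ↦ rho d ε z p.2) p.1) 0 := by
  have key := hasGradientAt_integral_of_dominated_of_gradient_le (μ := volume)
    (G := fun r p ↦ rho d ε (p.1 - r) p.2 * F p)
    (G' := fun r p ↦ F p • -gradient (fun z ↦ rho d ε z p.2) (p.1 - r))
    (bound := fun p ↦ C * (rhoMajorant d ε p / ε)) (Metric.ball_mem_nhds 0 one_pos)
    (Eventually.of_forall fun r ↦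
      (by unfold rho; fun_prop : Continuous fun p : Ed d × Ed d ↦ rho d ε (p.1 - r) p.2)
        |>.aestronglyMeasurable.mul hF)
    (by simpa using integrable_rho_mul hε hF hFC)
    (hF.smul ((continuous_gradient_rho_left.comp
      (continuous_fst.sub continuous_const |>.prodMk continuous_snd)).neg.aestronglyMeasurable))
    (ae_of_all _ fun p r hr ↦ norm_smul_le_of_abs_le (hFC p) (by
      simpa using norm_gradient_rho_left_sub_le hε (a := (r, 0))
        (by simpa using (mem_ball_zero_iff.1 hr).le) p))
    (((integrable_rhoMajorant hε).div_const ε).const_mul C)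
    (ae_of_all _ fun p r _ ↦ HasGradientAt.mul_const (HasGradientAt.comp_const_sub
      (hasGradientAt_rho_left (ε := ε) (p.1 - r) p.2).differentiableAt.hasGradientAt) (F p))
  simpa [integral_neg] using key

theorem hasGradientAt_integral_rho_add_right (hε : 0 < ε) (hF : AEStronglyMeasurable F)
    (hFC : ∀ p, |F p| ≤ C) :
    HasGradientAt (fun v ↦ ∫ p : Ed d × Ed d, rho d ε p.1 (p.2 + v) * F p)
      (∫ p, F p • gradient (fun u ↦ rho d ε p.1 u) p.2) 0 := by
  have key := hasGradientAt_integral_of_dominated_of_gradient_le (μ := volume)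
    (G := fun v p ↦ rho d ε p.1 (p.2 + v) * F p)
    (G' := fun v p ↦ F p • gradient (fun u ↦ rho d ε p.1 u) (p.2 + v))
    (bound := fun p ↦ C * (rhoMajorant d ε p / ε)) (Metric.ball_mem_nhds 0 one_pos)
    (Eventually.of_forall fun v ↦
      (by unfold rho; fun_prop : Continuous fun p : Ed d × Ed d ↦ rho d ε p.1 (p.2 + v))
        |>.aestronglyMeasurable.mul hF)
    (by simpa using integrable_rho_mul hε hF hFC)
    (hF.smul ((continuous_gradient_rho_right.comp
      (continuous_fst.prodMk (continuous_snd.add continuous_const))).aestronglyMeasurable))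
    (ae_of_all _ fun p v hv ↦ norm_smul_le_of_abs_le (hFC p) (by
      simpa using norm_gradient_rho_right_sub_le hε (a := (0, -v))
        (by simpa using (mem_ball_zero_iff.1 hv).le) p))
    (((integrable_rhoMajorant hε).div_const ε).const_mul C)
    (ae_of_all _ fun p v _ ↦ HasGradientAt.mul_const (HasGradientAt.comp_const_add
      (hasGradientAt_rho_right (ε := ε) p.1 (p.2 + v)).differentiableAt.hasGradientAt) (F p))
  simpa using key

end GaussianIntegrals

theorem le_rpow_half_sq_add_sq (a b : ℝ≥0∞) : a ≤ (a ^ 2 + b ^ 2) ^ (1 / 2 : ℝ) :=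
  calc a = (a ^ 2) ^ (1 / 2 : ℝ) := by
        rw [← ENNReal.rpow_natCast, ← ENNReal.rpow_mul]; norm_num
    _ ≤ _ := ENNReal.rpow_le_rpow le_self_add (by norm_num)

instance (d : ℕ) : (volume : Measure (Ed d × Ed d)).IsAddRightInvariant := by
  rw [Measure.volume_eq_prod]; infer_instance

section Flow

variable {θ : Ed d → Ω → Ω}

theorem hasGradOmega_of_hasGradientAt {Φ : Ω → ℝ} {ω : Ω} {g : Ed d}
    (h : HasGradientAt (fun r ↦ Φ (θ r ω)) g 0) : HasGradOmega θ Φ ω g := by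
  intro c v hc0 hc
  rw [hasGradientAt_iff_hasFDerivAt, ← hc0] at h
  rw [real_inner_comm]
  exact h.comp_hasDerivAt 0 hc

theorem contWrtD_of_continuousAt {α : Type*} [PseudoMetricSpace α] {g : Ω × Ed d → α}
    (hθ : ∀ ω, θ 0 ω = ω) (h : ∀ ω x, ContinuousAt (fun a : Ed d × Ed d ↦ g (θ a.1 ω, x - a.2)) 0) :
    ContWrtD θ g := by
  rintro ⟨ω, x⟩ η hη
  obtain ⟨δ, hδ, hg⟩ := Metric.continuousAt_iff.1 (h ω x) η hη
  refine ⟨δ, hδ, fun ⟨ω', y⟩ hq ↦ ?_⟩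
  have hxy : ‖x - y‖ < δ := (ENNReal.ofReal_lt_ofReal_iff hδ).1
    ((le_rpow_half_sq_add_sq _ _).trans_lt hq)
  have hω : dOmega θ ω ω' < ENNReal.ofReal δ := by
    refine lt_of_le_of_lt ?_ hq
    rw [dProd, add_comm]
    exact le_rpow_half_sq_add_sq _ _
  simp only [dOmega, iInf_lt_iff] at hω
  obtain ⟨z, rfl, hz⟩ := hω
  have := hg (x := (z, x - y)) (by
    rw [dist_zero_right, Prod.norm_def]
    exact max_lt ((ENNReal.ofReal_lt_ofReal_iff hδ).1 hz) hxy)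
  simpa [hθ] using this

theorem comp_flow_sub_eq (hθ : ∀ x z ω, θ z (θ x ω) = θ (x + z) ω) (f : Ω × Ed d → ℝ) (ω : Ω)
    (x : Ed d) (a p : Ed d × Ed d) :
    f (θ p.1 (θ a.1 ω), x - a.2 - p.2) = f (θ (p + a).1 ω, x - (p + a).2) := by
  rw [hθ, Prod.fst_add, Prod.snd_add, add_comm a.1, sub_sub, add_comm a.2]

theorem continuous_comp_flow_sub [TopologicalSpace Ω] (hθ : Continuous fun p : Ω × Ed d ↦ θ p.2 p.1)
    {f : Ω × Ed d → ℝ} (hf : Continuous f) (ω : Ω) (x : Ed d) :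
    Continuous fun p : Ed d × Ed d ↦ f (θ p.1 ω, x - p.2) :=
  hf.comp ((hθ.comp (continuous_const.prodMk continuous_fst)).prodMk
    (continuous_const.sub continuous_snd))

variable [TopologicalSpace Ω]

theorem feps_flow_add (hθ : ∀ x z ω, θ z (θ x ω) = θ (x + z) ω) (f : Ω × Ed d → ℝ) (ε : ℝ)
    (r v : Ed d) (ω : Ω) (x : Ed d) :
    feps θ f ε (θ r ω) (x + v) =
      ∫ zu : Ed d × Ed d, rho d ε (zu.1 - r) (zu.2 + v) * f (θ zu.1 ω, x - zu.2) := by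
  rw [← integral_add_right_eq_self _ ((r, -v) : Ed d × Ed d), feps]
  congr 1 with p
  simp only [Prod.fst_add, Prod.snd_add, add_sub_cancel_right, neg_add_cancel_right, hθ,
    add_comm r, show x - (p.2 + -v) = x + v - p.2 by abel]

variable {f : Ω × Ed d → ℝ} {ε C : ℝ} {ω : Ω} {x : Ed d}

theorem hasGradientAt_feps_flow (hθ : ∀ x z ω, θ z (θ x ω) = θ (x + z) ω) (hε : 0 < ε)
    (hF : AEStronglyMeasurable fun p : Ed d × Ed d ↦ f (θ p.1 ω, x - p.2))
    (hFC : ∀ p : Ed d × Ed d, |f (θ p.1 ω, x - p.2)| ≤ C) :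
    HasGradientAt (fun r ↦ feps θ f ε (θ r ω) x)
      (-∫ p : Ed d × Ed d, f (θ p.1 ω, x - p.2) • gradient (fun z ↦ rho d ε z p.2) p.1) 0 := by
  have hfeps : (fun r ↦ feps θ f ε (θ r ω) x) =
      fun r ↦ ∫ p : Ed d × Ed d, rho d ε (p.1 - r) p.2 * f (θ p.1 ω, x - p.2) :=
    funext fun r ↦ by simpa using feps_flow_add hθ f ε r 0 ω x
  rw [hfeps]
  exact hasGradientAt_integral_rho_sub_left hε hF hFC

theorem hasGradientAt_feps (hθ₀ : ∀ ω, θ 0 ω = ω) (hθ : ∀ x z ω, θ z (θ x ω) = θ (x + z) ω)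
    (hε : 0 < ε) (hF : AEStronglyMeasurable fun p : Ed d × Ed d ↦ f (θ p.1 ω, x - p.2))
    (hFC : ∀ p : Ed d × Ed d, |f (θ p.1 ω, x - p.2)| ≤ C) :
    HasGradientAt (feps θ f ε ω)
      (∫ p : Ed d × Ed d, f (θ p.1 ω, x - p.2) • gradient (fun u ↦ rho d ε p.1 u) p.2) x := by
  have hfeps : (fun v ↦ feps θ f ε ω (x + v)) =
      fun v ↦ ∫ p : Ed d × Ed d, rho d ε p.1 (p.2 + v) * f (θ p.1 ω, x - p.2) :=
    funext fun v ↦ by simpa [hθ₀] using feps_flow_add hθ f ε 0 v ω x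
  apply HasGradientAt.of_comp_const_add
  rw [hfeps]
  exact hasGradientAt_integral_rho_add_right hε hF hFC

end Flow

/-- Example 4.2. For a bounded continuous `f : Ω × ℝ^d → ℝ`, the
mollification `f_ε` satisfies the translation formula, its gradients (in `Ω` and in `ℝ^d`)
exist and are given by integrating against `∇ρ_ε`, and the resulting gradient is uniformly
bounded and continuous w.r.t. the extended metric `d`. -/
theorem mollified_gradient
    [TopologicalSpace Ω] [MeasurableSpace Ω]
    (θ : Ed d → Ω → Ω) (Q : Measure Ω) (adm : AdmissibleFlow Ω d θ Q)
    (f : Ω × Ed d → ℝ) (hfc : Continuous f) (hfb : ∃ C, ∀ p, |f p| ≤ C)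
    (ε : ℝ) (hε : 0 < ε) :
    (∀ (r v : Ed d) (ω : Ω) (x : Ed d),
      feps θ f ε (θ r ω) (x + v)
        = ∫ zu : Ed d × Ed d, rho d ε (zu.1 - r) (zu.2 + v) * f (θ zu.1 ω, x - zu.2)) ∧
    ∃ gΩ gX : Ω × Ed d → Ed d,
      (∀ (ω : Ω) (x : Ed d), HasGradOmega θ (fun ω' => feps θ f ε ω' x) ω (gΩ (ω, x))) ∧
      (∀ (ω : Ω) (x : Ed d), HasGradientAt (fun y => feps θ f ε ω y) (gX (ω, x)) x) ∧
      (∀ (ω : Ω) (x : Ed d),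
        -gΩ (ω, x)
          = ∫ zu : Ed d × Ed d, f (θ zu.1 ω, x - zu.2) • gradient (fun z => rho d ε z zu.2) zu.1) ∧
      (∀ (ω : Ω) (x : Ed d),
        gX (ω, x)
          = ∫ zu : Ed d × Ed d, f (θ zu.1 ω, x - zu.2) • gradient (fun u => rho d ε zu.1 u) zu.2) ∧
      (∃ C, ∀ p : Ω × Ed d, ‖gΩ p‖ + ‖gX p‖ ≤ C) ∧
      ContWrtD θ gΩ ∧ ContWrtD θ gX := by
  obtain ⟨C, hC⟩ := hfb
  have hF : ∀ ω x, AEStronglyMeasurable fun p : Ed d × Ed d ↦ f (θ p.1 ω, x - p.2) :=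
    fun ω x ↦ (continuous_comp_flow_sub adm.flow_cont hfc ω x).aestronglyMeasurable
  have hFC : ∀ ω x (p : Ed d × Ed d), |f (θ p.1 ω, x - p.2)| ≤ C := fun _ _ _ ↦ hC _
  have hM := (integrable_rhoMajorant (d := d) hε).div_const ε
  refine ⟨feps_flow_add adm.flow_comp f ε,
    fun q ↦ -∫ p : Ed d × Ed d, f (θ p.1 q.1, q.2 - p.2) • gradient (fun z ↦ rho d ε z p.2) p.1,
    fun q ↦ ∫ p : Ed d × Ed d, f (θ p.1 q.1, q.2 - p.2) • gradient (fun u ↦ rho d ε p.1 u) p.2,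
    fun ω x ↦ hasGradOmega_of_hasGradientAt
      (hasGradientAt_feps_flow adm.flow_comp hε (hF ω x) (hFC ω x)),
    fun ω x ↦ hasGradientAt_feps adm.flow_zero adm.flow_comp hε (hF ω x) (hFC ω x),
    fun ω x ↦ neg_neg _, fun ω x ↦ rfl,
    ⟨2 * (C * ∫ p, rhoMajorant d ε p / ε), fun q ↦ ?_⟩,
    contWrtD_of_continuousAt adm.flow_zero fun ω x ↦ ?_,
    contWrtD_of_continuousAt adm.flow_zero fun ω x ↦ ?_⟩
  · rw [norm_neg, two_mul]
    exact add_le_add (norm_integral_smul_gradient_rho_left_le hε (hFC _ _))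
      (norm_integral_smul_gradient_rho_right_le hε (hFC _ _))
  · simp_rw [comp_flow_sub_eq adm.flow_comp f ω x]
    exact (continuousAt_integral_comp_add_smul (hF ω x) (hFC ω x)
      continuous_gradient_rho_left hM fun a ha p ↦ norm_gradient_rho_left_sub_le hε ha p).neg
  · simp_rw [comp_flow_sub_eq adm.flow_comp f ω x]
    exact continuousAt_integral_comp_add_smul (hF ω x) (hFC ω x)
      continuous_gradient_rho_right hM fun a ha p ↦ norm_gradient_rho_right_sub_le hε ha p

end
end
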